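/- If a* > 0 and b ≥ 0 satisfy the first-order condition ψ(a*,b) = 0, i.e. −a*·k·(q + q·μ_α·θ(b)) + c·γ(b) + λk·(e^{−μ_α a*} − 1)/μ_α = 0, then J(a*,b) = k·a*. -/

import Mathlib

open Real

theorem mul_exp_sub_mul_exp_pos {Φ ρ : ℝ} (hΦ : 0 < Φ) (hρ : ρ < 0) (b : ℝ) :
    0 < Φ * exp (Φ * b) - ρ * exp (ρ * b) := by
  have hΦe : 0 < Φ * exp (Φ * b) := mul_pos hΦ (exp_pos _)
  have hρe : ρ * exp (ρ * b) < 0 := mul_neg_of_neg_of_pos hρ (exp_pos _)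
  linarith

theorem exp_sub_exp_div_nonneg {Φ ρ b : ℝ} (hΦ : 0 < Φ) (hρ : ρ < 0) (hb : 0 ≤ b) :
    0 ≤ (exp (Φ * b) - exp (ρ * b)) / (Φ * exp (Φ * b) - ρ * exp (ρ * b)) := by
  have hexp : exp (ρ * b) ≤ exp (Φ * b) :=
    exp_le_exp.mpr (mul_le_mul_of_nonneg_right (hρ.trans hΦ).le hb)
  exact div_nonneg (sub_nonneg.mpr hexp) (mul_exp_sub_mul_exp_pos hΦ hρ b).le

/-- With `E = exp (-x a)`, the partial mean `(1 - E (x a + 1)) / x` splits as `(1 - E) / x - a E`;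
the first part cancels against the first-order condition, the second supplies the `λ E` term. -/
theorem sub_mul_partialMean_eq_of_firstOrder {x a k q θ G lam E : ℝ} (hx : x ≠ 0)
    (hfoc : -(a * k * (q + q * x * θ)) + G + lam * k * (E - 1) / x = 0) :
    G - lam * k * ((1 - E * (x * a + 1)) / x) = k * a * (q + x * q * θ + lam * E) := by
  field_simp at hfoc ⊢
  linear_combination hfoc

theorem stmt12_general (c α lam q μ k : ℝ)
    (hα0 : 0 < α)
    (hlam : 0 < lam) (hq : 0 < q) (hμ : 0 < μ)
    (Φ ρ : ℝ)
    (hΦpos : 0 < Φ) (hρneg : ρ < 0)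
    (γ θf m : ℝ → ℝ) (D J : ℝ → ℝ → ℝ)
    (hθf : ∀ b, θf b = (Real.exp (Φ*b) - Real.exp (ρ*b))/(Φ*Real.exp (Φ*b) - ρ*Real.exp (ρ*b)))
    (hm : ∀ a, m a = (1 - Real.exp (-(μ/α)*a)*((μ/α)*a + 1))/(μ/α))
    (hD : ∀ a b, D a b = q + (μ/α)*q*θf b + lam*Real.exp (-(μ/α)*a))
    (hJ : ∀ a b, J a b = (c*γ b - lam*k*m a)/(D a b)) :
    ∀ astar b : ℝ, 0 < astar → 0 ≤ b →
      -(astar*k*(q + q*(μ/α)*θf b)) + c*γ b + lam*k*(Real.exp (-(μ/α)*astar) - 1)/(μ/α) = 0 →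
      J astar b = k * astar := by
  intro a b _ hb hfoc
  have hμα : 0 < μ / α := div_pos hμ hα0
  have hθ : 0 ≤ θf b := hθf b ▸ exp_sub_exp_div_nonneg hΦpos hρneg hb
  have hDpos : 0 < D a b := by
    rw [hD]
    exact add_pos (add_pos_of_pos_of_nonneg hq (mul_nonneg (mul_nonneg hμα.le hq.le) hθ))
      (mul_pos hlam (exp_pos _))
  rw [hJ, hm, sub_mul_partialMean_eq_of_firstOrder hμα.ne' hfoc, ← hD]
  exact mul_div_cancel_right₀ _ hDpos.ne'

theorem stmt12 (c α lam q μ k : ℝ)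
    (hc : 0 < c) (hα0 : 0 < α) (hα1 : α ≤ 1)
    (hlam : 0 < lam) (hq : 0 < q) (hμ : 0 < μ) (hk : 1 ≤ k)
    (Δ Φ ρ : ℝ)
    (hΔ : Δ = (c*μ - α*lam - α*q)^2 + 4*α*c*μ*q)
    (hΦ : Φ = (-(c*μ - α*lam - α*q) + Real.sqrt Δ) / (2*α*c))
    (hρ : ρ = (-(c*μ - α*lam - α*q) - Real.sqrt Δ) / (2*α*c))
    (hΦpos : 0 < Φ) (hρneg : ρ < 0)
    (γ θf m : ℝ → ℝ) (D J ψ : ℝ → ℝ → ℝ)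
    (hγ : ∀ b, γ b = (Φ - ρ)/(Φ*Real.exp (Φ*b) - ρ*Real.exp (ρ*b)))
    (hθf : ∀ b, θf b = (Real.exp (Φ*b) - Real.exp (ρ*b))/(Φ*Real.exp (Φ*b) - ρ*Real.exp (ρ*b)))
    (hm : ∀ a, m a = (1 - Real.exp (-(μ/α)*a)*((μ/α)*a + 1))/(μ/α))
    (hD : ∀ a b, D a b = q + (μ/α)*q*θf b + lam*Real.exp (-(μ/α)*a))
    (hJ : ∀ a b, J a b = (c*γ b - lam*k*m a)/(D a b))
    (hψ : ∀ a b, ψ a b = -(a*k*(q + q*(μ/α)*θf b)) + c*γ b + lam*k*(Real.exp (-(μ/α)*a) - 1)/(μ/α)) :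
    ∀ astar b : ℝ, 0 < astar → 0 ≤ b →
      -(astar*k*(q + q*(μ/α)*θf b)) + c*γ b + lam*k*(Real.exp (-(μ/α)*astar) - 1)/(μ/α) = 0 →
      J astar b = k * astar :=
  stmt12_general c α lam q μ k hα0 hlam hq hμ Φ ρ hΦpos hρneg γ θf m D J hθf hm hD hJ
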